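/- Let 1 ≤ j ≤ i ≤ n be integers and let γ0 > 0, a < 1, 0 < p < 1 be real. Then the sum of w_n(π) over all set partitions π of {1,…,n} whose restriction to {1,…,i} has exactly j blocks equals γ0^j · p^{−a·j} · S_a(i,j) · R_{n,γ0,a,p}(i,j) / D_n (the distribution of the number of clusters among the first i elements in a sample of size n). -/

import Mathlib

open scoped Classical BigOperators

/-- Generalized Stirling numbers of the first kind:
`S_a(n,l) = (n!/l!) · Σ over compositions of n into l positive parts of
∏ Γ(n_k − a)/(n_k!·Γ(1−a))`. -/
noncomputable def genStirling (a : ℝ) (n l : ℕ) : ℝ :=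
  (n.factorial : ℝ) / (l.factorial : ℝ) *
    ∑ f ∈ (Finset.Nat.antidiagonalTuple l n).filter (fun f => ∀ k, 0 < f k),
      ∏ k, Real.Gamma ((f k : ℝ) - a) / ((f k).factorial * Real.Gamma (1 - a))

/-- `D_n = Σ_{ℓ=0}^n γ0^ℓ · p^{−a·ℓ} · S_a(n,ℓ)`. -/
noncomputable def Dsum (γ0 a p : ℝ) (n : ℕ) : ℝ :=
  ∑ l ∈ Finset.range (n + 1), γ0 ^ l * p ^ (-(a * (l : ℝ))) * genStirling a n l

/-- A finite family of blocks forming a set partition of `Fin n`. -/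
def IsPartition {n : ℕ} (P : Finset (Finset (Fin n))) : Prop :=
  ∅ ∉ P ∧ ∀ x : Fin n, ∃! B, B ∈ P ∧ x ∈ B

/-- The finite set of all set partitions of `{1,…,n}` (modeled as `Fin n`). -/
noncomputable def partitionsOf (n : ℕ) : Finset (Finset (Finset (Fin n))) :=
  Finset.univ.filter IsPartition

/-- The generalized Chinese restaurant sampling formula weight of a family of blocks
`P`, for sample size `m`:
`w_m(P) = γ0^{|P|} · p^{−a·|P|} · ∏_{B∈P} Γ(|B|−a)/Γ(1−a) / D_m`. -/
noncomputable def crsfW (γ0 a p : ℝ) (m : ℕ) {n : ℕ} (P : Finset (Finset (Fin n))) : ℝ :=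
  γ0 ^ P.card * p ^ (-(a * (P.card : ℝ))) *
    (∏ B ∈ P, Real.Gamma ((B.card : ℝ) - a) / Real.Gamma (1 - a)) / Dsum γ0 a p m

/-- The restriction of a family of blocks to the first `i` elements of `Fin n`:
intersect each block with `{x | x < i}` and drop the empty pieces. -/
noncomputable def restrictFirst (n i : ℕ) (P : Finset (Finset (Fin n))) :
    Finset (Finset (Fin n)) :=
  (P.image fun B => B.filter fun x => (x : ℕ) < i).filter fun B => B.Nonempty

/-- A set partition of the first `i` elements of `Fin n`. -/
def IsPartitionOn (n i : ℕ) (P : Finset (Finset (Fin n))) : Prop :=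
  ∅ ∉ P ∧ (∀ B ∈ P, ∀ x ∈ B, (x : ℕ) < i) ∧
    ∀ x : Fin n, (x : ℕ) < i → ∃! B, B ∈ P ∧ x ∈ B

/-- The backward recursion `R_{n,γ0,a,p}(i,j)`: `R(n,j) = 1` and
`R(i,j) = (i − a·j)·R(i+1,j) + γ0·p^{−a}·R(i+1,j+1)` for `i < n`. -/
noncomputable def Rrec (γ0 a p : ℝ) (n : ℕ) : ℕ → ℕ → ℝ
  | i, j =>
    if _ : n ≤ i then 1
    else ((i : ℝ) - a * (j : ℝ)) * Rrec γ0 a p n (i + 1) j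
      + γ0 * p ^ (-a) * Rrec γ0 a p n (i + 1) (j + 1)

/-!
Sort the partitions `π` of `{0, …, n-1}` by their restriction `τ` to the first `i` points.
A partition of the first `x + 1` points restricting to `τ` either has `{x}` as a new block or
is `τ` with `x` added to one of its blocks `B`; the weight `∏ Γ(|B| - a) / Γ(1 - a)` is then
multiplied by `1`, resp. by `|B| - a`, and these factors sum to `x - a·|τ|` over the blocks.
Backward induction on `i` shows that the total weight of the partitions `π` over `τ` is the weight
of `τ` times `R(i, |τ|)`. The same one-point step shows that the sum of the weights of the
partitions of `{0, …, i-1}` into `j` blocks satisfies the recursion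
`S(i+1, j+1) = (i - a(j+1)) S(i, j+1) + S(i, j)`. The composition formula defining `S_a` obeys it
too: multiply by `i + 1 = Σ_k n_k` and split according to whether the marked part `n_k` is `1`.
-/

open Finset

section Restriction
variable {n : ℕ}

noncomputable def partitionsOn (n i : ℕ) : Finset (Finset (Finset (Fin n))) :=
  univ.filter (IsPartitionOn n i)

@[simp] lemma mem_partitionsOn {i : ℕ} {P : Finset (Finset (Fin n))} :
    P ∈ partitionsOn n i ↔ IsPartitionOn n i P := by
  simp [partitionsOn]

lemma partitionsOn_self : partitionsOn n n = partitionsOf n := by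
  ext P
  simp [partitionsOf, IsPartitionOn, IsPartition]

lemma isPartitionOn_iff {i : ℕ} {P : Finset (Finset (Fin n))} :
    IsPartitionOn n i P ↔ ∅ ∉ P ∧ (∀ B ∈ P, ∀ x ∈ B, (x : ℕ) < i) ∧
      (∀ x : Fin n, (x : ℕ) < i → ∃ B ∈ P, x ∈ B) ∧
      ∀ B ∈ P, ∀ C ∈ P, ∀ x ∈ B, x ∈ C → B = C := by
  unfold IsPartitionOn
  refine and_congr_right fun _ => and_congr_right fun hbd => ⟨fun h => ⟨?_, ?_⟩, fun h => ?_⟩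
  · exact fun x hx => (h x hx).exists.imp fun B hB => ⟨hB.1, hB.2⟩
  · exact fun B hB C hC x hxB hxC => (h x (hbd B hB x hxB)).unique ⟨hB, hxB⟩ ⟨hC, hxC⟩
  · intro x hx
    obtain ⟨B, hB, hxB⟩ := h.1 x hx
    exact ⟨B, ⟨hB, hxB⟩, fun C hC => h.2 C hC.1 B hB x hC.2 hxB⟩

noncomputable def truncBlock (i : ℕ) (B : Finset (Fin n)) : Finset (Fin n) :=
  B.filter fun x => (x : ℕ) < i

@[simp] lemma mem_truncBlock {i : ℕ} {B : Finset (Fin n)} {x : Fin n} :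
    x ∈ truncBlock i B ↔ x ∈ B ∧ (x : ℕ) < i :=
  mem_filter

lemma truncBlock_eq_self {i : ℕ} {B : Finset (Fin n)} (h : ∀ x ∈ B, (x : ℕ) < i) :
    truncBlock i B = B :=
  filter_true_of_mem h

lemma mem_restrictFirst {i : ℕ} {P : Finset (Finset (Fin n))} {C : Finset (Fin n)} :
    C ∈ restrictFirst n i P ↔ (∃ B ∈ P, truncBlock i B = C) ∧ C.Nonempty := by
  simp [restrictFirst, truncBlock]

lemma restrictFirst_restrictFirst {i i' : ℕ} (h : i ≤ i') (P : Finset (Finset (Fin n))) :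
    restrictFirst n i (restrictFirst n i' P) = restrictFirst n i P := by
  have htrunc (B : Finset (Fin n)) : truncBlock i (truncBlock i' B) = truncBlock i B := by
    ext x
    simp only [mem_truncBlock]
    exact ⟨fun hx => ⟨hx.1.1, hx.2⟩, fun hx => ⟨⟨hx.1, by omega⟩, hx.2⟩⟩
  ext C
  simp only [mem_restrictFirst]
  constructor
  · rintro ⟨⟨_, ⟨⟨B, hB, rfl⟩, _⟩, rfl⟩, hC⟩
    exact ⟨⟨B, hB, (htrunc B).symm⟩, hC⟩
  · rintro ⟨⟨B, hB, rfl⟩, hC⟩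
    have hC' : (truncBlock i (truncBlock i' B)).Nonempty := by rwa [htrunc]
    exact ⟨⟨truncBlock i' B, ⟨⟨B, hB, rfl⟩, hC'.mono (filter_subset _ _)⟩, htrunc B⟩, hC⟩

namespace IsPartitionOn
variable {i : ℕ} {P : Finset (Finset (Fin n))}

lemma nonempty_of_mem (hP : IsPartitionOn n i P) {B : Finset (Fin n)} (hB : B ∈ P) :
    B.Nonempty :=
  nonempty_iff_ne_empty.2 fun h => hP.1 (h ▸ hB)

lemma lt_of_mem (hP : IsPartitionOn n i P) {B : Finset (Fin n)} (hB : B ∈ P) {x : Fin n}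
    (hx : x ∈ B) : (x : ℕ) < i :=
  hP.2.1 B hB x hx

lemma eq_of_mem_of_mem (hP : IsPartitionOn n i P) {B C : Finset (Fin n)} (hB : B ∈ P)
    (hC : C ∈ P) {x : Fin n} (hxB : x ∈ B) (hxC : x ∈ C) : B = C :=
  (isPartitionOn_iff.1 hP).2.2.2 B hB C hC x hxB hxC

lemma restrictFirst_eq_self (hP : IsPartitionOn n i P) : restrictFirst n i P = P := by
  ext C
  simp only [mem_restrictFirst]
  constructor
  · rintro ⟨⟨B, hB, rfl⟩, _⟩
    rwa [truncBlock_eq_self fun x => hP.lt_of_mem hB]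
  · intro hC
    exact ⟨⟨C, hC, truncBlock_eq_self fun x => hP.lt_of_mem hC⟩, hP.nonempty_of_mem hC⟩

lemma sum_card (hP : IsPartitionOn n i P) (hi : i ≤ n) : ∑ B ∈ P, #B = i := by
  have hunion : P.biUnion id = univ.filter fun x : Fin n => (x : ℕ) < i := by
    ext x
    simp only [mem_biUnion, id, mem_filter, mem_univ, true_and]
    exact ⟨fun ⟨B, hB, hx⟩ => hP.lt_of_mem hB hx,
      fun hx => ((isPartitionOn_iff.1 hP).2.2.1 x hx)⟩
  have hdisj : (P : Set (Finset (Fin n))).PairwiseDisjoint id := fun B hB C hC hBC =>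
    disjoint_left.2 fun x hxB hxC => hBC (hP.eq_of_mem_of_mem hB hC hxB hxC)
  change ∑ B ∈ P, #(id B) = i
  rw [← card_biUnion hdisj, hunion, Fin.card_filter_val_lt, min_eq_right hi]

end IsPartitionOn

lemma isPartitionOn_restrictFirst {i i' : ℕ} {P : Finset (Finset (Fin n))} (h : i ≤ i')
    (hP : IsPartitionOn n i' P) :
    IsPartitionOn n i (restrictFirst n i P) := by
  obtain ⟨-, -, hcover, huniq⟩ := isPartitionOn_iff.1 hP
  refine isPartitionOn_iff.2 ⟨fun h0 => ?_, ?_, fun x hx => ?_, ?_⟩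
  · simpa using (mem_restrictFirst.1 h0).2
  · rintro C hC x hx
    obtain ⟨⟨B, -, rfl⟩, -⟩ := mem_restrictFirst.1 hC
    exact (mem_truncBlock.1 hx).2
  · obtain ⟨B, hB, hxB⟩ := hcover x (by omega)
    have hx' : x ∈ truncBlock i B := mem_truncBlock.2 ⟨hxB, hx⟩
    exact ⟨_, mem_restrictFirst.2 ⟨⟨B, hB, rfl⟩, ⟨x, hx'⟩⟩, hx'⟩
  · rintro _ hB' _ hC' x hxB hxC
    obtain ⟨⟨B, hB, rfl⟩, -⟩ := mem_restrictFirst.1 hB'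
    obtain ⟨⟨C, hC, rfl⟩, -⟩ := mem_restrictFirst.1 hC'
    rw [huniq B hB C hC x (mem_truncBlock.1 hxB).1 (mem_truncBlock.1 hxC).1]

end Restriction

section Extension
variable {n : ℕ} {x : Fin n} {τ : Finset (Finset (Fin n))}

def addToBlock (x : Fin n) (τ : Finset (Finset (Fin n))) (B : Finset (Fin n)) :
    Finset (Finset (Fin n)) :=
  insert (insert x B) (τ.erase B)

lemma IsPartitionOn.notMem_of_mem (hτ : IsPartitionOn n x τ) {B : Finset (Fin n)}
    (hB : B ∈ τ) : x ∉ B :=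
  fun hx => (hτ.lt_of_mem hB hx).false

lemma isPartitionOn_insert_singleton (hτ : IsPartitionOn n x τ) :
    IsPartitionOn n (x + 1) (insert {x} τ) := by
  obtain ⟨h0, hbd, hcover, huniq⟩ := isPartitionOn_iff.1 hτ
  refine isPartitionOn_iff.2 ⟨?_, ?_, fun y hy => ?_, ?_⟩
  · simpa [eq_comm] using h0
  · simp only [mem_insert, forall_eq_or_imp, mem_singleton, forall_eq]
    exact ⟨by omega, fun B hB y hy => by have := hbd B hB y hy; omega⟩
  · rcases (by omega : (y : ℕ) < x ∨ y = x) with hy | rfl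
    · obtain ⟨B, hB, hyB⟩ := hcover y hy
      exact ⟨B, mem_insert_of_mem hB, hyB⟩
    · exact ⟨{y}, mem_insert_self _ _, mem_singleton_self y⟩
  · simp only [mem_insert]
    rintro B (rfl | hB) C (rfl | hC) y hyB hyC
    · rfl
    · exact absurd (mem_singleton.1 hyB ▸ hyC) (hτ.notMem_of_mem hC)
    · exact absurd (mem_singleton.1 hyC ▸ hyB) (hτ.notMem_of_mem hB)
    · exact huniq B hB C hC y hyB hyC

lemma isPartitionOn_addToBlock {B₀ : Finset (Fin n)} (hτ : IsPartitionOn n x τ)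
    (hB₀ : B₀ ∈ τ) : IsPartitionOn n (x + 1) (addToBlock x τ B₀) := by
  obtain ⟨h0, hbd, hcover, huniq⟩ := isPartitionOn_iff.1 hτ
  refine isPartitionOn_iff.2 ⟨?_, ?_, fun y hy => ?_, ?_⟩
  · simp only [addToBlock, mem_insert, mem_erase, not_or]
    exact ⟨(insert_ne_empty x B₀).symm, fun h => h0 h.2⟩
  · simp only [addToBlock, mem_insert, forall_eq_or_imp, mem_erase]
    refine ⟨⟨by omega, fun y hy => ?_⟩, fun B hB y hy => ?_⟩
    · have := hbd B₀ hB₀ y hy; omega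
    · have := hbd B hB.2 y hy; omega
  · simp only [addToBlock, mem_insert, mem_erase]
    rcases (by omega : (y : ℕ) < x ∨ y = x) with hy | rfl
    · obtain ⟨B, hB, hyB⟩ := hcover y hy
      by_cases hBB₀ : B = B₀
      · exact ⟨insert x B₀, Or.inl rfl, mem_insert_of_mem (hBB₀ ▸ hyB)⟩
      · exact ⟨B, Or.inr ⟨hBB₀, hB⟩, hyB⟩
    · exact ⟨insert y B₀, Or.inl rfl, mem_insert_self y B₀⟩
  · simp only [addToBlock, mem_insert, mem_erase]
    have key : ∀ C, C ≠ B₀ → C ∈ τ → ∀ y ∈ insert x B₀, y ∉ C := by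
      intro C hCB₀ hC y hy hyC
      rcases mem_insert.1 hy with rfl | hy
      · exact hτ.notMem_of_mem hC hyC
      · exact hCB₀ (huniq C hC B₀ hB₀ y hyC hy)
    rintro B (rfl | ⟨hBB₀, hB⟩) C (rfl | ⟨hCB₀, hC⟩) y hyB hyC
    · rfl
    · exact absurd hyC (key C hCB₀ hC y hyB)
    · exact absurd hyB (key B hBB₀ hB y hyC)
    · exact huniq B hB C hC y hyB hyC

lemma restrictFirst_insert_singleton (hτ : IsPartitionOn n x τ) :
    restrictFirst n x (insert {x} τ) = τ := by
  conv_rhs => rw [← hτ.restrictFirst_eq_self]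
  simp [restrictFirst, filter_insert, filter_singleton]

lemma restrictFirst_addToBlock {B₀ : Finset (Fin n)} (hτ : IsPartitionOn n x τ)
    (hB₀ : B₀ ∈ τ) : restrictFirst n x (addToBlock x τ B₀) = τ := by
  conv_rhs => rw [← hτ.restrictFirst_eq_self, ← insert_erase hB₀]
  simp [restrictFirst, addToBlock, filter_insert]

lemma IsPartitionOn.restrictFirst_eq_filter {τ' : Finset (Finset (Fin n))}
    (hτ' : IsPartitionOn n (x + 1) τ') {C : Finset (Fin n)} (hC : C ∈ τ') (hxC : x ∈ C) :
    restrictFirst n x τ' = (insert (C.erase x) (τ'.erase C)).filter Finset.Nonempty := by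
  have htrunc : ∀ D ∈ τ', truncBlock x D = D.erase x := fun D hD => by
    ext y
    by_cases hy : y ∈ D
    · have := hτ'.lt_of_mem hD hy
      simp only [mem_truncBlock, mem_erase, hy, and_true, true_and, ← Fin.val_ne_iff]
      omega
    · simp [hy]
  have herase : ∀ D ∈ τ'.erase C, D.erase x = D := fun D hD =>
    erase_eq_of_notMem fun hxD =>
      ne_of_mem_erase hD (hτ'.eq_of_mem_of_mem (mem_of_mem_erase hD) hC hxD hxC)
  have himage : τ'.image (truncBlock x) = insert (C.erase x) (τ'.erase C) :=
    calc τ'.image (truncBlock x) = (insert C (τ'.erase C)).image (·.erase x) := by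
          rw [insert_erase hC]; exact image_congr htrunc
      _ = insert (C.erase x) (τ'.erase C) := by
          rw [image_insert, image_congr herase, image_id']
  exact congrArg (filter _) himage

lemma IsPartitionOn.eq_insert_singleton_or_addToBlock {τ' : Finset (Finset (Fin n))}
    (hτ' : IsPartitionOn n (x + 1) τ') :
    τ' = insert {x} (restrictFirst n x τ') ∨
      ∃ B ∈ restrictFirst n x τ', τ' = addToBlock x (restrictFirst n x τ') B := by
  obtain ⟨C, hC, hxC⟩ := (isPartitionOn_iff.1 hτ').2.2.1 x (Nat.lt_succ_self x)
  have hτ'C : τ' = insert C (τ'.erase C) := (insert_erase hC).symm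
  have hrest := hτ'.restrictFirst_eq_filter hC hxC
  have hE : (τ'.erase C).filter Finset.Nonempty = τ'.erase C :=
    filter_true_of_mem fun D hD => hτ'.nonempty_of_mem (mem_of_mem_erase hD)
  rcases (C.erase x).eq_empty_or_nonempty with hCx | hCx
  · left
    have : C = {x} := by rw [← insert_erase hxC, hCx]; rfl
    rw [hrest, filter_insert, if_neg (by simp [hCx]), hE, ← this, ← hτ'C]
  · right
    rw [hrest, filter_insert, if_pos hCx, hE]
    refine ⟨C.erase x, mem_insert_self _ _, ?_⟩
    have hnotin : C.erase x ∉ τ'.erase C := fun h => by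
      obtain ⟨y, hy⟩ := hCx
      exact (ne_of_mem_erase h) (hτ'.eq_of_mem_of_mem (mem_of_mem_erase h) hC hy
        (mem_of_mem_erase hy))
    rw [addToBlock, erase_insert hnotin, insert_erase hxC, ← hτ'C]

lemma IsPartitionOn.eq_insert_of_mem_addToBlock (hτ : IsPartitionOn n x τ)
    {B D : Finset (Fin n)} (hD : D ∈ addToBlock x τ B) (hxD : x ∈ D) : D = insert x B :=
  (mem_insert.1 hD).resolve_right fun h => hτ.notMem_of_mem (mem_of_mem_erase h) hxD

lemma IsPartitionOn.injOn_addToBlock (hτ : IsPartitionOn n x τ) :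
    Set.InjOn (addToBlock x τ) τ := fun B₀ hB₀ B₁ hB₁ h => by
  have hmem : insert x B₀ ∈ addToBlock x τ B₁ := h ▸ mem_insert_self _ _
  have := hτ.eq_insert_of_mem_addToBlock hmem (mem_insert_self x B₀)
  rw [← erase_insert (hτ.notMem_of_mem hB₀), this, erase_insert (hτ.notMem_of_mem hB₁)]

lemma IsPartitionOn.insert_singleton_ne_addToBlock (hτ : IsPartitionOn n x τ)
    {B : Finset (Fin n)} (hB : B ∈ τ) : insert {x} τ ≠ addToBlock x τ B := fun h => by
  have hmem : {x} ∈ addToBlock x τ B := h ▸ mem_insert_self _ _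
  have hxB := hτ.eq_insert_of_mem_addToBlock hmem (mem_singleton_self x)
  obtain ⟨y, hy⟩ := hτ.nonempty_of_mem hB
  have hyx : y = x := mem_singleton.1 (hxB ▸ mem_insert_of_mem hy)
  exact hτ.notMem_of_mem hB (hyx ▸ hy)

lemma IsPartitionOn.filter_restrictFirst_eq (hτ : IsPartitionOn n x τ) :
    (partitionsOn n (x + 1)).filter (restrictFirst n x · = τ) =
      insert (insert {x} τ) (τ.image (addToBlock x τ)) := by
  ext τ'
  simp only [mem_filter, mem_partitionsOn, mem_insert, mem_image]
  constructor
  · rintro ⟨hτ', rfl⟩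
    exact (hτ'.eq_insert_singleton_or_addToBlock).imp id fun ⟨B, hB, h⟩ => ⟨B, hB, h.symm⟩
  · rintro (rfl | ⟨B, hB, rfl⟩)
    · exact ⟨isPartitionOn_insert_singleton hτ, restrictFirst_insert_singleton hτ⟩
    · exact ⟨isPartitionOn_addToBlock hτ hB, restrictFirst_addToBlock hτ hB⟩

lemma IsPartitionOn.sum_filter_restrictFirst {M : Type*} [AddCommMonoid M]
    (hτ : IsPartitionOn n x τ) (φ : Finset (Finset (Fin n)) → M) :
    ∑ τ' ∈ (partitionsOn n (x + 1)).filter (restrictFirst n x · = τ), φ τ' =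
      φ (insert {x} τ) + ∑ B ∈ τ, φ (addToBlock x τ B) := by
  rw [hτ.filter_restrictFirst_eq, sum_insert, sum_image hτ.injOn_addToBlock]
  rw [mem_image]
  rintro ⟨B, hB, h⟩
  exact hτ.insert_singleton_ne_addToBlock hB h.symm

end Extension

section Fibers
variable {n : ℕ} {M : Type*} [AddCommMonoid M]

lemma sum_filter_restrictFirst_fiberwise {i k : ℕ} (h : i ≤ k)
    (q : Finset (Finset (Fin n)) → Prop) [DecidablePred q] (F : Finset (Finset (Fin n)) → M) :
    ∑ π ∈ (partitionsOn n k).filter (fun π => q (restrictFirst n i π)), F π =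
      ∑ τ ∈ (partitionsOn n i).filter q,
        ∑ π ∈ (partitionsOn n k).filter (restrictFirst n i · = τ), F π := by
  have hmaps : ∀ π ∈ (partitionsOn n k).filter (fun π => q (restrictFirst n i π)),
      restrictFirst n i π ∈ (partitionsOn n i).filter q := fun π hπ => by
    rw [mem_filter, mem_partitionsOn] at hπ ⊢
    exact ⟨isPartitionOn_restrictFirst h hπ.1, hπ.2⟩
  rw [← sum_fiberwise_of_maps_to hmaps]
  refine sum_congr rfl fun τ hτ => ?_
  rw [filter_filter]
  refine sum_congr (filter_congr fun π _ => ?_) fun _ _ => rfl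
  exact ⟨fun h => h.2, fun h => ⟨h ▸ (mem_filter.1 hτ).2, h⟩⟩

lemma sum_filter_restrictFirst_tower {i i' k : ℕ} (hi : i ≤ i') (hi' : i' ≤ k)
    (τ : Finset (Finset (Fin n))) (F : Finset (Finset (Fin n)) → M) :
    ∑ π ∈ (partitionsOn n k).filter (restrictFirst n i · = τ), F π =
      ∑ τ' ∈ (partitionsOn n i').filter (restrictFirst n i · = τ),
        ∑ π ∈ (partitionsOn n k).filter (restrictFirst n i' · = τ'), F π := by
  refine Eq.trans ?_ (sum_filter_restrictFirst_fiberwise hi' (restrictFirst n i · = τ) F)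
  refine sum_congr (filter_congr fun π _ => ?_) fun _ _ => rfl
  rw [restrictFirst_restrictFirst hi]

end Fibers

section Weights
variable {n : ℕ} {a : ℝ}

noncomputable def gammaRatio (a : ℝ) (m : ℕ) : ℝ :=
  Real.Gamma (m - a) / Real.Gamma (1 - a)

lemma gammaRatio_one (ha : a < 1) : gammaRatio a 1 = 1 := by
  rw [gammaRatio, Nat.cast_one]
  exact div_self (Real.Gamma_pos_of_pos (by linarith)).ne'

lemma gammaRatio_succ {m : ℕ} (hm : (m : ℝ) ≠ a) :
    gammaRatio a (m + 1) = (m - a) * gammaRatio a m := by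
  rw [gammaRatio, gammaRatio, Nat.cast_succ, add_sub_right_comm,
    Real.Gamma_add_one (sub_ne_zero.2 hm), mul_div_assoc]

noncomputable def partitionWeight (a : ℝ) (τ : Finset (Finset (Fin n))) : ℝ :=
  ∏ B ∈ τ, gammaRatio a #B

variable {x : Fin n} {τ : Finset (Finset (Fin n))}

lemma IsPartitionOn.card_insert_singleton (hτ : IsPartitionOn n x τ) :
    #(insert {x} τ) = #τ + 1 :=
  card_insert_of_notMem fun h => hτ.notMem_of_mem h (mem_singleton_self x)

lemma IsPartitionOn.card_addToBlock (hτ : IsPartitionOn n x τ) {B : Finset (Fin n)}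
    (hB : B ∈ τ) : #(addToBlock x τ B) = #τ := by
  rw [addToBlock, card_insert_of_notMem fun h =>
    hτ.notMem_of_mem (mem_of_mem_erase h) (mem_insert_self x B), card_erase_add_one hB]

lemma IsPartitionOn.partitionWeight_insert_singleton (ha : a < 1)
    (hτ : IsPartitionOn n x τ) : partitionWeight a (insert {x} τ) = partitionWeight a τ := by
  rw [partitionWeight, prod_insert fun h => hτ.notMem_of_mem h (mem_singleton_self x),
    card_singleton, gammaRatio_one ha, one_mul, partitionWeight]

lemma IsPartitionOn.partitionWeight_addToBlock (ha : a < 1) (hτ : IsPartitionOn n x τ)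
    {B : Finset (Fin n)} (hB : B ∈ τ) :
    partitionWeight a (addToBlock x τ B) = (#B - a) * partitionWeight a τ := by
  have hBa : (#B : ℝ) ≠ a :=
    (ha.trans_le (by exact_mod_cast (hτ.nonempty_of_mem hB).card_pos)).ne'
  rw [partitionWeight, addToBlock, prod_insert fun h =>
    hτ.notMem_of_mem (mem_of_mem_erase h) (mem_insert_self x B),
    card_insert_of_notMem (hτ.notMem_of_mem hB), gammaRatio_succ hBa, mul_assoc,
    mul_prod_erase τ (fun B => gammaRatio a #B) hB, partitionWeight]

lemma IsPartitionOn.sum_filter_restrictFirst_partitionWeight (ha : a < 1)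
    (hτ : IsPartitionOn n x τ) (f : ℕ → ℝ) :
    ∑ τ' ∈ (partitionsOn n (x + 1)).filter (restrictFirst n x · = τ),
        partitionWeight a τ' * f #τ' =
      partitionWeight a τ * (f (#τ + 1) + (x - a * #τ) * f #τ) := by
  rw [hτ.sum_filter_restrictFirst, hτ.partitionWeight_insert_singleton ha,
    hτ.card_insert_singleton]
  have hblocks : ∑ B ∈ τ, partitionWeight a (addToBlock x τ B) * f #(addToBlock x τ B) =
      ∑ B ∈ τ, (#B - a) * (partitionWeight a τ * f #τ) := sum_congr rfl fun B hB => by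
    rw [hτ.partitionWeight_addToBlock ha hB, hτ.card_addToBlock hB, mul_assoc]
  have hcard : ∑ B ∈ τ, ((#B : ℝ) - a) = x - a * #τ := by
    rw [sum_sub_distrib, ← Nat.cast_sum, hτ.sum_card x.isLt.le, sum_const, nsmul_eq_mul,
      mul_comm]
  rw [hblocks, ← sum_mul, hcard]
  ring

end Weights

section Compositions
variable {a : ℝ}

def compositions (l m : ℕ) : Finset (Fin l → ℕ) :=
  (Finset.Nat.antidiagonalTuple l m).filter fun f => ∀ k, 0 < f k

lemma mem_compositions {l m : ℕ} {f : Fin l → ℕ} :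
    f ∈ compositions l m ↔ ∑ k, f k = m ∧ ∀ k, 0 < f k := by
  simp [compositions, Finset.Nat.mem_antidiagonalTuple]

lemma insertNth_mem_compositions {l m c : ℕ} {k : Fin (l + 1)} {g : Fin l → ℕ} :
    k.insertNth c g ∈ compositions (l + 1) m ↔ c + ∑ i, g i = m ∧ 0 < c ∧ ∀ i, 0 < g i := by
  simp [mem_compositions, Fin.sum_insertNth, Fin.forall_iff_succAbove k]

lemma mem_compositions_succ {l m : ℕ} (k : Fin (l + 1)) {f : Fin (l + 1) → ℕ} :
    f ∈ compositions (l + 1) m ↔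
      f k + ∑ i, k.removeNth f i = m ∧ 0 < f k ∧ ∀ i, 0 < k.removeNth f i := by
  conv_lhs => rw [← Fin.insertNth_self_removeNth k f]
  exact insertNth_mem_compositions

noncomputable def stirlingTerm (a : ℝ) (m : ℕ) : ℝ :=
  gammaRatio a m / m.factorial

lemma stirlingTerm_one (ha : a < 1) : stirlingTerm a 1 = 1 := by
  rw [stirlingTerm, gammaRatio_one ha, Nat.factorial_one, Nat.cast_one, div_one]

lemma succ_mul_stirlingTerm_succ {m : ℕ} (hm : (m : ℝ) ≠ a) :
    (m + 1) * stirlingTerm a (m + 1) = (m - a) * stirlingTerm a m := by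
  rw [stirlingTerm, stirlingTerm, gammaRatio_succ hm, Nat.factorial_succ, Nat.cast_mul,
    Nat.cast_succ]
  have : (m.factorial : ℝ) ≠ 0 := by positivity
  field_simp

lemma prod_stirlingTerm_insertNth {l c : ℕ} (k : Fin (l + 1)) (g : Fin l → ℕ) :
    ∏ i, stirlingTerm a (k.insertNth (α := fun _ => ℕ) c g i) =
      stirlingTerm a c * ∏ i, stirlingTerm a (g i) := by
  simp [Fin.prod_univ_succAbove _ k]

noncomputable def compositionSum (a : ℝ) (l m : ℕ) : ℝ :=
  ∑ f ∈ compositions l m, ∏ k, stirlingTerm a (f k)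

lemma genStirling_eq_compositionSum (m l : ℕ) :
    genStirling a m l = m.factorial / l.factorial * compositionSum a l m := by
  simp only [genStirling, compositionSum, compositions, stirlingTerm, gammaRatio, div_div,
    mul_comm (Real.Gamma (1 - a))]

lemma sum_compositions_filter_eq_one (ha : a < 1) {l m : ℕ} (k : Fin (l + 1)) :
    ∑ f ∈ (compositions (l + 1) (m + 1)).filter (· k = 1),
        (f k : ℝ) * ∏ i, stirlingTerm a (f i) =
      compositionSum a l m := by
  refine sum_nbij' k.removeNth (k.insertNth (α := fun _ => ℕ) 1) (fun f hf => ?_)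
    (fun g hg => ?_) (fun f hf => ?_) (fun g _ => ?_) (fun f hf => ?_)
  · obtain ⟨hf, hfk⟩ := mem_filter.1 hf
    obtain ⟨hsum, -, hpos⟩ := (mem_compositions_succ k).1 hf
    exact mem_compositions.2 ⟨by omega, hpos⟩
  · obtain ⟨hsum, hpos⟩ := mem_compositions.1 hg
    exact mem_filter.2 ⟨insertNth_mem_compositions.2 ⟨by omega, one_pos, hpos⟩, by simp⟩
  · exact Fin.insertNth_eq_iff.2 ⟨(mem_filter.1 hf).2.symm, rfl⟩
  · simp
  · conv_lhs => rw [← Fin.insertNth_self_removeNth k f]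
    rw [prod_stirlingTerm_insertNth]
    simp [(mem_filter.1 hf).2, stirlingTerm_one ha]

lemma sum_compositions_filter_ne_one (ha : a < 1) {l m : ℕ} (k : Fin (l + 1)) :
    ∑ f ∈ (compositions (l + 1) (m + 1)).filter (· k ≠ 1),
        (f k : ℝ) * ∏ i, stirlingTerm a (f i) =
      ∑ g ∈ compositions (l + 1) m, (g k - a) * ∏ i, stirlingTerm a (g i) := by
  refine sum_nbij' (fun f => k.insertNth (α := fun _ => ℕ) (f k - 1) (k.removeNth f))
    (fun g => k.insertNth (α := fun _ => ℕ) (g k + 1) (k.removeNth g)) (fun f hf => ?_)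
    (fun g hg => ?_) (fun f hf => ?_) (fun g _ => ?_) (fun f hf => ?_)
  · obtain ⟨hf, hfk⟩ := mem_filter.1 hf
    obtain ⟨hsum, hpos', hpos⟩ := (mem_compositions_succ k).1 hf
    exact insertNth_mem_compositions.2 ⟨by omega, by omega, hpos⟩
  · obtain ⟨hsum, hpos', hpos⟩ := (mem_compositions_succ k).1 hg
    refine mem_filter.2 ⟨insertNth_mem_compositions.2 ⟨by omega, by omega, hpos⟩, ?_⟩
    rw [Fin.insertNth_apply_same]
    omega
  · have hfk : 1 ≤ f k := ((mem_compositions_succ k).1 (mem_filter.1 hf).1).2.1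
    simp only [Fin.insertNth_apply_same, Fin.removeNth_insertNth, Nat.sub_add_cancel hfk,
      Fin.insertNth_self_removeNth]
  · simp only [Fin.insertNth_apply_same, Fin.removeNth_insertNth, Nat.add_sub_cancel,
      Fin.insertNth_self_removeNth]
  · obtain ⟨hf, hfk⟩ := mem_filter.1 hf
    have hfk' : 2 ≤ f k := by have := ((mem_compositions_succ k).1 hf).2.1; omega
    obtain ⟨c, hc⟩ : ∃ c, f k = c + 1 := ⟨f k - 1, by omega⟩
    have hca : (c : ℝ) ≠ a := (ha.trans_le (by exact_mod_cast (by omega : 1 ≤ c))).ne'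
    conv_lhs => rw [← Fin.insertNth_self_removeNth k f]
    simp only [prod_stirlingTerm_insertNth, Fin.insertNth_apply_same, hc, Nat.add_sub_cancel,
      Nat.cast_succ]
    rw [← mul_assoc, succ_mul_stirlingTerm_succ hca, mul_assoc]

end Compositions

section StirlingRecursion
variable {a : ℝ}

lemma succ_mul_compositionSum_succ (ha : a < 1) (l m : ℕ) :
    (m + 1) * compositionSum a (l + 1) (m + 1) =
      (m - a * (l + 1)) * compositionSum a (l + 1) m + (l + 1) * compositionSum a l m := by
  have hsum {m' : ℕ} {f : Fin (l + 1) → ℕ} (hf : f ∈ compositions (l + 1) m') :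
      ∑ k, (f k : ℝ) = m' := by
    exact_mod_cast (mem_compositions.1 hf).1
  calc (m + 1) * compositionSum a (l + 1) (m + 1)
      = ∑ k, ∑ f ∈ compositions (l + 1) (m + 1), (f k : ℝ) * ∏ i, stirlingTerm a (f i) := by
        rw [compositionSum, mul_sum, sum_comm]
        refine sum_congr rfl fun f hf => ?_
        rw [← sum_mul, hsum hf, Nat.cast_succ]
    _ = ∑ k : Fin (l + 1), (compositionSum a l m +
          ∑ g ∈ compositions (l + 1) m, (g k - a) * ∏ i, stirlingTerm a (g i)) := by
        refine sum_congr rfl fun k _ => ?_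
        rw [← sum_filter_add_sum_filter_not _ (· k = 1), sum_compositions_filter_eq_one ha,
          sum_compositions_filter_ne_one ha]
    _ = (l + 1) * compositionSum a l m + ∑ g ∈ compositions (l + 1) m,
          (∑ k, ((g k : ℝ) - a)) * ∏ i, stirlingTerm a (g i) := by
        simp only [sum_add_distrib, sum_const, card_univ, Fintype.card_fin, nsmul_eq_mul,
          Nat.cast_succ, sum_mul]
        rw [sum_comm]
    _ = _ := by
        rw [add_comm]
        congr 1
        rw [compositionSum, mul_sum]
        refine sum_congr rfl fun g hg => ?_
        rw [sum_sub_distrib, hsum hg, sum_const, card_univ, Fintype.card_fin, nsmul_eq_mul,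
          Nat.cast_succ]
        ring

lemma genStirling_succ_succ (ha : a < 1) (i j : ℕ) :
    genStirling a (i + 1) (j + 1) =
      (i - a * (j + 1)) * genStirling a i (j + 1) + genStirling a i j := by
  have h := succ_mul_compositionSum_succ ha j i
  simp only [genStirling_eq_compositionSum, Nat.factorial_succ, Nat.cast_mul, Nat.cast_succ]
  have : (j.factorial : ℝ) ≠ 0 := by positivity
  field_simp
  linear_combination h

lemma compositionSum_zero_zero : compositionSum a 0 0 = 1 := by
  simp [compositionSum, compositions]

lemma compositionSum_zero_succ (m : ℕ) : compositionSum a 0 (m + 1) = 0 := by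
  simp [compositionSum, compositions]

lemma compositionSum_succ_zero (l : ℕ) : compositionSum a (l + 1) 0 = 0 := by
  refine sum_eq_zero fun f hf => ?_
  obtain ⟨hsum, hpos⟩ := mem_compositions.1 hf
  exact absurd ((sum_eq_zero_iff.1 hsum) 0 (mem_univ 0)) (hpos 0).ne'

end StirlingRecursion

section StirlingSum
variable {n : ℕ} {a : ℝ}

noncomputable def stirlingSum (a : ℝ) (n i j : ℕ) : ℝ :=
  ∑ τ ∈ (partitionsOn n i).filter (#· = j), partitionWeight a τ

lemma partitionsOn_zero : partitionsOn n 0 = {∅} := by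
  ext P
  rw [mem_partitionsOn, mem_singleton]
  refine ⟨fun hP => eq_empty_of_forall_notMem fun B hB => ?_, ?_⟩
  · obtain ⟨x, hx⟩ := hP.nonempty_of_mem hB
    exact (hP.lt_of_mem hB hx).not_ge (Nat.zero_le _)
  · rintro rfl
    simp [IsPartitionOn]

lemma stirlingSum_succ_zero {i : ℕ} (hi : i < n) : stirlingSum a n (i + 1) 0 = 0 := by
  refine sum_eq_zero fun τ hτ => ?_
  obtain ⟨hτ, hcard⟩ := mem_filter.1 hτ
  obtain ⟨B, hB, -⟩ := (isPartitionOn_iff.1 (mem_partitionsOn.1 hτ)).2.2.1 ⟨0, by omega⟩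
    (Nat.succ_pos i)
  exact absurd (card_eq_zero.1 hcard ▸ hB) (notMem_empty B)

lemma stirlingSum_succ_succ (ha : a < 1) {i : ℕ} (hi : i < n) (j : ℕ) :
    stirlingSum a n (i + 1) (j + 1) =
      (i - a * (j + 1)) * stirlingSum a n i (j + 1) + stirlingSum a n i j := by
  let x : Fin n := ⟨i, hi⟩
  let ind : ℕ → ℝ := fun k => if k = j + 1 then 1 else 0
  have hmaps : ∀ τ' ∈ partitionsOn n (x + 1), restrictFirst n x τ' ∈ partitionsOn n x :=
    fun τ' hτ' => mem_partitionsOn.2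
      (isPartitionOn_restrictFirst (Nat.le_succ i) (mem_partitionsOn.1 hτ'))
  calc stirlingSum a n (i + 1) (j + 1)
      = ∑ τ' ∈ partitionsOn n (x + 1), partitionWeight a τ' * ind #τ' := by
        simp only [stirlingSum, sum_filter, ind, mul_ite, mul_one, mul_zero]
        rfl
    _ = ∑ τ ∈ partitionsOn n i,
          partitionWeight a τ * (ind (#τ + 1) + (i - a * #τ) * ind #τ) := by
        rw [← sum_fiberwise_of_maps_to hmaps]
        exact sum_congr rfl fun τ hτ =>
          (mem_partitionsOn.1 hτ).sum_filter_restrictFirst_partitionWeight ha ind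
    _ = ∑ τ ∈ partitionsOn n i, ((if #τ = j then partitionWeight a τ else 0) +
          (i - a * (j + 1)) * (if #τ = j + 1 then partitionWeight a τ else 0)) := by
        refine sum_congr rfl fun τ _ => ?_
        by_cases h : #τ = j + 1
        · simp [ind, h]
          ring
        · simp [ind, h]
    _ = (i - a * (j + 1)) * stirlingSum a n i (j + 1) + stirlingSum a n i j := by
        rw [sum_add_distrib, ← mul_sum, ← sum_filter, ← sum_filter, add_comm, stirlingSum,
          stirlingSum]

lemma stirlingSum_eq_genStirling (ha : a < 1) {i : ℕ} (hi : i ≤ n) (j : ℕ) :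
    stirlingSum a n i j = genStirling a i j := by
  induction i generalizing j with
  | zero =>
    cases j <;> simp [stirlingSum, partitionsOn_zero, filter_singleton, partitionWeight,
      genStirling_eq_compositionSum, compositionSum_zero_zero, compositionSum_succ_zero]
  | succ i ih =>
    cases j with
    | zero => simp [stirlingSum_succ_zero hi, genStirling_eq_compositionSum,
        compositionSum_zero_succ]
    | succ j => rw [stirlingSum_succ_succ ha hi, genStirling_succ_succ ha, ih (by omega),
        ih (by omega)]

end StirlingSum

section ClusterWeight
variable {n : ℕ} {γ0 a p : ℝ}

lemma Rrec_of_le {i : ℕ} (h : n ≤ i) (j : ℕ) : Rrec γ0 a p n i j = 1 := by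
  rw [Rrec, dif_pos h]

lemma Rrec_of_lt {i : ℕ} (h : i < n) (j : ℕ) :
    Rrec γ0 a p n i j =
      (i - a * j) * Rrec γ0 a p n (i + 1) j + γ0 * p ^ (-a) * Rrec γ0 a p n (i + 1) (j + 1) := by
  rw [Rrec, dif_neg h.not_ge]

noncomputable def clusterWeight (γ0 a p : ℝ) (τ : Finset (Finset (Fin n))) : ℝ :=
  γ0 ^ #τ * p ^ (-(a * #τ)) * partitionWeight a τ

lemma sum_filter_restrictFirst_clusterWeight (ha : a < 1) (hp : 0 < p) {i : ℕ} (hi : i ≤ n)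
    {τ : Finset (Finset (Fin n))} (hτ : IsPartitionOn n i τ) :
    ∑ π ∈ (partitionsOn n n).filter (restrictFirst n i · = τ), clusterWeight γ0 a p π =
      clusterWeight γ0 a p τ * Rrec γ0 a p n i #τ := by
  induction hi using Nat.decreasingInduction generalizing τ with
  | self =>
    have hfiber : (partitionsOn n n).filter (restrictFirst n n · = τ) = {τ} := by
      ext π
      simp only [mem_filter, mem_partitionsOn, mem_singleton]
      refine ⟨fun ⟨hπ, h⟩ => h ▸ hπ.restrictFirst_eq_self.symm, ?_⟩
      rintro rfl
      exact ⟨hτ, hτ.restrictFirst_eq_self⟩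
    rw [hfiber, sum_singleton, Rrec_of_le le_rfl, mul_one]
  | of_succ i hi ih =>
    let x : Fin n := ⟨i, hi⟩
    have hτx : IsPartitionOn n x τ := hτ
    have hweight (k : ℕ) : γ0 ^ (k + 1) * p ^ (-(a * (k + 1 : ℕ))) =
        γ0 ^ k * p ^ (-(a * k)) * (γ0 * p ^ (-a)) := by
      rw [Nat.cast_succ, mul_add_one, neg_add, Real.rpow_add hp, pow_succ]
      ring
    calc ∑ π ∈ (partitionsOn n n).filter (restrictFirst n i · = τ), clusterWeight γ0 a p π
        = ∑ τ' ∈ (partitionsOn n (x + 1)).filter (restrictFirst n x · = τ),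
            partitionWeight a τ' *
              (γ0 ^ #τ' * p ^ (-(a * #τ')) * Rrec γ0 a p n (i + 1) #τ') := by
          rw [sum_filter_restrictFirst_tower (Nat.le_succ i) hi]
          refine sum_congr rfl fun τ' hτ' => ?_
          rw [ih (mem_partitionsOn.1 (mem_filter.1 hτ').1), clusterWeight]
          ring
      _ = clusterWeight γ0 a p τ * Rrec γ0 a p n i #τ := by
          refine (hτx.sum_filter_restrictFirst_partitionWeight ha
            fun k => γ0 ^ k * p ^ (-(a * k)) * Rrec γ0 a p n (i + 1) k).trans ?_
          rw [hweight, Rrec_of_lt hi, clusterWeight]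
          ring

end ClusterWeight

theorem crsf_cluster_number_distribution_general (j i n : ℕ)
    (hin : i ≤ n) (γ0 a p : ℝ) (ha : a < 1) (hp0 : 0 < p) :
    ∑ π ∈ (partitionsOf n).filter (fun π => (restrictFirst n i π).card = j),
        crsfW γ0 a p n π
      = γ0 ^ j * p ^ (-(a * (j : ℝ))) * genStirling a i j * Rrec γ0 a p n i j /
          Dsum γ0 a p n := by
  have hcrsfW (π : Finset (Finset (Fin n))) :
      crsfW γ0 a p n π = clusterWeight γ0 a p π / Dsum γ0 a p n := rfl
  rw [sum_congr rfl fun π _ => hcrsfW π, ← sum_div, ← partitionsOn_self,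
    sum_filter_restrictFirst_fiberwise hin (#· = j), ← stirlingSum_eq_genStirling ha hin,
    stirlingSum, mul_sum, sum_mul]
  congr 1
  refine sum_congr rfl fun τ hτ => ?_
  obtain ⟨hτ', rfl⟩ := mem_filter.1 hτ
  rw [sum_filter_restrictFirst_clusterWeight ha hp0 hin (mem_partitionsOn.1 hτ'), clusterWeight]

/-- Distribution of the number of clusters among the first i elements in a sample
of size n: for 1 ≤ j ≤ i ≤ n, the sum of w_n(π) over all set partitions π of
{1,…,n} whose restriction to {1,…,i} has exactly j blocks equals
γ0^j · p^{−a·j} · S_a(i,j) · R_{n,γ0,a,p}(i,j) / D_n. -/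
theorem crsf_cluster_number_distribution (j i n : ℕ) (hj : 1 ≤ j) (hji : j ≤ i)
    (hin : i ≤ n) (γ0 a p : ℝ) (hγ : 0 < γ0) (ha : a < 1) (hp0 : 0 < p) (hp1 : p < 1) :
    ∑ π ∈ (partitionsOf n).filter (fun π => (restrictFirst n i π).card = j),
        crsfW γ0 a p n π
      = γ0 ^ j * p ^ (-(a * (j : ℝ))) * genStirling a i j * Rrec γ0 a p n i j /
          Dsum γ0 a p n :=
  crsf_cluster_number_distribution_general j i n hin γ0 a p ha hp0
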